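/- arXiv:2602.17142 — 6 statements merged into one kernel-verified Lean document; each statement's English description precedes it below -/
import Mathlib

section
/- Let D be a state lattice over a finite variable type 𝒱 and define, for N : ℕ, d ∈ D and i : 𝒱 → D, the element stabilise_N(i, d) = d ⊔ X ⊔ Y as in the context. Then γ(stabilise_N(i, d)) ⊇ γ(d) ∪ { s₂ ∈ 𝕊 | ∃ s₁ ∈ γ(d), (s₁, s₂) ∈ γ×(i) }. That is, stabilise_N soundly over-approximates the set of states reachable within one transition of i from any state captured by d. -/
open scoped Classical

/-- A state lattice over values `Val`, variables `𝒱` and abstract elements `D`: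
a bounded lattice with a monotone concretisation and a havoc operation. -/
structure StateLattice (Val 𝒱 D : Type) [Fintype 𝒱] [Lattice D] [BoundedOrder D] where
  gamma : D → Set (𝒱 → Val)
  gamma_mono : ∀ d₁ d₂ : D, d₁ ≤ d₂ → gamma d₁ ⊆ gamma d₂
  gamma_bot : gamma ⊥ = ∅
  gamma_inf : ∀ d₁ d₂ : D, gamma d₁ ∩ gamma d₂ ⊆ gamma (d₁ ⊓ d₂)
  havoc : D → Set 𝒱 → D
  havoc_spec : ∀ (d : D) (W : Set 𝒱),
    {s : 𝒱 → Val | ∃ s₀ ∈ gamma d, ∀ v ∉ W, s v = s₀ v} ⊆ gamma (havoc d W)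
  havoc_bot : ∀ W : Set 𝒱, havoc ⊥ W = ⊥
  havoc_absorb : ∀ (d : D) (W₁ W₂ : Set 𝒱), havoc d W₁ = d → havoc d (W₁ ∪ W₂) = havoc d W₂
  havoc_mono : ∀ (d₁ d₂ : D) (W₁ W₂ : Set 𝒱), W₁ ⊆ W₂ → d₁ ≤ d₂ → havoc d₁ W₁ ≤ havoc d₂ W₂

/-- Concretisation of an interference element of the conditional-writes domain. -/
def gammaX {Val 𝒱 D : Type} [Fintype 𝒱] [Lattice D] [BoundedOrder D]
    (SL : StateLattice Val 𝒱 D) (i : 𝒱 → D) : Set ((𝒱 → Val) × (𝒱 → Val)) :=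
  {p | ∀ v, p.2 v ≠ p.1 v → p.1 ∈ SL.gamma (i v)}

/-- The `stabilise` function: `d ⊔ X ⊔ Y`, where `X` is the precise component over
variable sets of cardinality at most `N`, and `Y` the conservative component. -/
noncomputable def stabilise {Val 𝒱 D : Type} [Fintype 𝒱] [Lattice D] [BoundedOrder D]
    (SL : StateLattice Val 𝒱 D) (N : ℕ) (i : 𝒱 → D) (d : D) : D :=
  let X : D := (Finset.univ.filter fun V : Finset 𝒱 => V.card ≤ N).sup
    (fun V => SL.havoc (d ⊓ V.inf i) ↑V)
  let VN : Finset (Finset 𝒱) := Finset.univ.filter fun V : Finset 𝒱 =>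
    V.card = N + 1 ∧ d ⊓ V.inf i ≠ ⊥
  let Y : D := SL.havoc (VN.sup fun V => d ⊓ V.inf i) ↑(VN.sup id)
  d ⊔ X ⊔ Y


lemma mem_gamma_inf_finset {Val 𝒱 D : Type} [Fintype 𝒱] [Lattice D] [BoundedOrder D]
    (SL : StateLattice Val 𝒱 D) (i : 𝒱 → D) (V : Finset 𝒱) :
    ∀ (d : D) (s : 𝒱 → Val), s ∈ SL.gamma d → (∀ v ∈ V, s ∈ SL.gamma (i v)) →
      s ∈ SL.gamma (d ⊓ V.inf i) := by
  induction V using Finset.induction with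
  | empty => intro d s hs _; simpa using hs
  | @insert a V ha ih =>
    intro d s hs hv
    rw [Finset.inf_insert, ← inf_assoc]
    exact ih (d ⊓ i a) s (SL.gamma_inf _ _ ⟨hs, hv a (Finset.mem_insert_self a V)⟩)
      (fun v hvV => hv v (Finset.mem_insert_of_mem hvV))

/-- Soundness of `stabilise`: it over-approximates the set of states reachable
within one transition of `i` from any state captured by `d`. -/
theorem stabilise_sound {Val 𝒱 D : Type} [Fintype 𝒱] [Lattice D] [BoundedOrder D]
    (SL : StateLattice Val 𝒱 D) (N : ℕ) (i : 𝒱 → D) (d : D) :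
    SL.gamma d ∪ {s₂ | ∃ s₁ ∈ SL.gamma d, (s₁, s₂) ∈ gammaX SL i} ⊆
      SL.gamma (stabilise SL N i d) := by
  intro s₂ hs₂
  unfold stabilise
  rcases hs₂ with h | ⟨s₁, hs₁, hi⟩
  · exact SL.gamma_mono _ _ (le_sup_of_le_left le_sup_left) h
  · set W : Finset 𝒱 := Finset.univ.filter (fun v => s₂ v ≠ s₁ v) with hW
    have hmemW : ∀ v ∈ W, s₁ ∈ SL.gamma (i v) := by
      intro v hv
      exact hi v (by simpa [hW] using hv)
    have hoff : ∀ v, v ∉ W → s₂ v = s₁ v := by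
      intro v hv
      by_contra h
      exact hv (by simp [hW, h])
    by_cases hcard : W.card ≤ N
    · -- precise component
      have h1 : s₁ ∈ SL.gamma (d ⊓ W.inf i) := mem_gamma_inf_finset SL i W d s₁ hs₁ hmemW
      have h2 : s₂ ∈ SL.gamma (SL.havoc (d ⊓ W.inf i) ↑W) :=
        SL.havoc_spec _ _ ⟨s₁, h1, fun v hv => hoff v (by simpa using hv)⟩
      refine SL.gamma_mono _ _ ?_ h2
      refine le_sup_of_le_left (le_sup_of_le_right ?_)
      exact Finset.le_sup (f := fun V : Finset 𝒱 => SL.havoc (d ⊓ V.inf i) ↑V) (Finset.mem_filter.mpr ⟨Finset.mem_univ W, hcard⟩)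
    · -- conservative component
      push_neg at hcard
      set VN : Finset (Finset 𝒱) := Finset.univ.filter (fun V : Finset 𝒱 =>
        V.card = N + 1 ∧ d ⊓ V.inf i ≠ ⊥) with hVN
      have hsub : ∀ v ∈ W, ∃ V ∈ VN, v ∈ V := by
        intro v hv
        obtain ⟨t, ht, htc⟩ := Finset.exists_subset_card_eq (s := W.erase v) (n := N)
          (by
            have := Finset.card_erase_of_mem hv
            omega)
        refine ⟨insert v t, ?_, Finset.mem_insert_self v t⟩
        have hvt : v ∉ t := fun h => (Finset.mem_erase.mp (ht h)).1 rfl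
        have hins : insert v t ⊆ W :=
          Finset.insert_subset hv (ht.trans (Finset.erase_subset v W))
        have hmem : s₁ ∈ SL.gamma (d ⊓ (insert v t).inf i) :=
          mem_gamma_inf_finset SL i _ d s₁ hs₁ (fun u hu => hmemW u (hins hu))
        refine Finset.mem_filter.mpr ⟨Finset.mem_univ _, ?_, ?_⟩
        · rw [Finset.card_insert_of_notMem hvt, htc]
        · intro hbot
          rw [hbot, SL.gamma_bot] at hmem
          exact hmem
      have hWsub : (↑W : Set 𝒱) ⊆ ↑(VN.sup id) := by
        intro v hv
        obtain ⟨V, hV, hvV⟩ := hsub v (by simpa using hv)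
        exact Finset.mem_coe.mpr (Finset.mem_sup.mpr ⟨V, hV, hvV⟩)
      -- pick some V ∈ VN to get s₁ into the sup
      have hN : N + 1 ≤ W.card := hcard
      obtain ⟨V₀, hV₀sub, hV₀c⟩ := Finset.exists_subset_card_eq (s := W) (n := N + 1) hN
      have hmem₀ : s₁ ∈ SL.gamma (d ⊓ V₀.inf i) :=
        mem_gamma_inf_finset SL i _ d s₁ hs₁ (fun u hu => hmemW u (hV₀sub hu))
      have hV₀ : V₀ ∈ VN := by
        refine Finset.mem_filter.mpr ⟨Finset.mem_univ _, hV₀c, ?_⟩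
        intro hbot
        rw [hbot, SL.gamma_bot] at hmem₀
        exact hmem₀
      have hsup : s₁ ∈ SL.gamma (VN.sup fun V => d ⊓ V.inf i) :=
        SL.gamma_mono _ _ (Finset.le_sup hV₀) hmem₀
      have h2 : s₂ ∈ SL.gamma (SL.havoc (VN.sup fun V => d ⊓ V.inf i) ↑(VN.sup id)) :=
        SL.havoc_spec _ _ ⟨s₁, hsup, fun v hv => hoff v (fun hvW => hv (hWsub hvW))⟩
      exact SL.gamma_mono _ _ le_sup_right h2
end

section
/- Sufficiency of the close fixpoint condition for transitivity: let D be a state lattice over a finite variable type 𝒱 and let i : 𝒱 → D satisfy, for every v ∈ 𝒱, that i(v) ≥ ⨆_{V ⊆ 𝒱} ( (i(v))⟨V⟩ ⊓ ⨅_{v' ∈ V} i(v') ). Then the relation γ×(i) is transitive: for all states s₁, s₂, s₃, if (s₁, s₂) ∈ γ×(i) and (s₂, s₃) ∈ γ×(i) then (s₁, s₃) ∈ γ×(i). -/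
open scoped Classical

/-- Sufficiency of the `close` fixpoint condition for transitivity: if for every
variable `v`, `i(v)` is above the join over all variable sets `V` of
`(i(v))⟨V⟩ ⊓ ⨅_{v' ∈ V} i(v')`, then `γ×(i)` is a transitive relation. -/
theorem close_fixpoint_transitive {Val 𝒱 D : Type} [Fintype 𝒱] [Lattice D] [BoundedOrder D]
    (SL : StateLattice Val 𝒱 D) (i : 𝒱 → D)
    (hfix : ∀ v : 𝒱,
      (Finset.univ : Finset (Finset 𝒱)).sup
        (fun V => SL.havoc (i v) ↑V ⊓ V.inf i) ≤ i v) :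
    ∀ s₁ s₂ s₃ : 𝒱 → Val,
      (s₁, s₂) ∈ gammaX SL i → (s₂, s₃) ∈ gammaX SL i → (s₁, s₃) ∈ gammaX SL i := by
  have gamma_finset_inf : ∀ (s : 𝒱 → Val) (V : Finset 𝒱), V.Nonempty →
      (∀ v ∈ V, s ∈ SL.gamma (i v)) → s ∈ SL.gamma (V.inf i) := by
    intro s V hV
    induction hV using Finset.Nonempty.cons_induction with
    | singleton v => intro h; simpa using h v (by simp)
    | cons v V hv hV ih =>
      intro h
      rw [Finset.inf_cons]
      exact SL.gamma_inf _ _ ⟨h v (by simp), ih fun v' hv' => h v' (by simp [hv'])⟩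
  intro s₁ s₂ s₃ h12 h23 v hne
  by_cases hv : s₂ v = s₁ v
  · -- s₃ v ≠ s₂ v, so s₂ ∈ γ(i v)
    have h2 : s₂ ∈ SL.gamma (i v) := h23 v (by simpa [hv] using hne)
    classical
    set V : Finset 𝒱 := Finset.univ.filter (fun v' => s₂ v' ≠ s₁ v') with hV
    by_cases hVne : V.Nonempty
    · have hs1havoc : s₁ ∈ SL.gamma (SL.havoc (i v) ↑V) := by
        apply SL.havoc_spec
        refine ⟨s₂, h2, fun v' hv' => ?_⟩
        by_contra hne'
        exact hv' (by simp [hV]; exact fun h => hne' h.symm)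
      have hs1inf : s₁ ∈ SL.gamma (V.inf i) := by
        apply gamma_finset_inf s₁ V hVne
        intro v' hv'
        have : s₂ v' ≠ s₁ v' := by simpa [hV] using hv'
        exact h12 v' this
      have : s₁ ∈ SL.gamma (SL.havoc (i v) ↑V ⊓ V.inf i) :=
        SL.gamma_inf _ _ ⟨hs1havoc, hs1inf⟩
      exact SL.gamma_mono _ _ (le_trans (Finset.le_sup (Finset.mem_univ V)) (hfix v)) this
    · -- V empty: s₁ = s₂
      have hs : s₁ = s₂ := by
        funext v'
        by_contra h
        exact hVne ⟨v', by simp [hV]; exact fun h' => h h'.symm⟩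
      exact hs ▸ h2
  · exact h12 v hv
end

section
/- Conservativeness of the Y component of stabilise: let D be a state lattice over a finite variable type 𝒱, let d ∈ D, i : 𝒱 → D, N : ℕ, and let V' ⊆ 𝒱 be any variable set with |V'| > N. Then (d ⊓ M_i(V'))⟨V'⟩ ≤ Y, where 𝒱_N = { V ⊆ 𝒱 | |V| = N + 1 ∧ d ⊓ M_i(V) ≠ ⊥ } and Y = (⨆_{V ∈ 𝒱_N} (d ⊓ M_i(V)))⟨⋃_{V ∈ 𝒱_N} V⟩. That is, the effect of any transition updating more than N variables is over-approximated by Y, which only quantifies over variable sets of cardinality N + 1. -/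
open scoped Classical

/-- Conservativeness of the `Y` component of `stabilise`: the effect of any
transition updating a set `V'` of more than `N` variables is over-approximated by
`Y`, which only quantifies over variable sets of cardinality `N + 1`. -/
theorem Y_conservative {Val 𝒱 D : Type} [Fintype 𝒱] [Lattice D] [BoundedOrder D]
    (SL : StateLattice Val 𝒱 D) (d : D) (i : 𝒱 → D) (N : ℕ)
    (V' : Finset 𝒱) (hV' : V'.card > N) :
    SL.havoc (d ⊓ V'.inf i) ↑V' ≤
      (let VN : Finset (Finset 𝒱) := Finset.univ.filter fun V : Finset 𝒱 =>
          V.card = N + 1 ∧ d ⊓ V.inf i ≠ ⊥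
       SL.havoc (VN.sup fun V => d ⊓ V.inf i) ↑(VN.sup id)) := by
  set VN : Finset (Finset 𝒱) := Finset.univ.filter (fun V : Finset 𝒱 => V.card = N + 1 ∧ d ⊓ V.inf i ≠ ⊥) with hVN
  show SL.havoc (d ⊓ V'.inf i) ↑V' ≤ SL.havoc (VN.sup fun V => d ⊓ V.inf i) ↑(VN.sup id)
  by_cases hbot : d ⊓ V'.inf i = ⊥
  · rw [hbot, SL.havoc_bot]
    exact bot_le
  -- key: for each v ∈ V', there is V ∈ VN with v ∈ V and d ⊓ V'.inf i ≤ d ⊓ V.inf i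
  have key : ∀ v ∈ V', ∃ V ∈ VN, v ∈ V ∧ d ⊓ V'.inf i ≤ d ⊓ V.inf i := by
    intro v hv
    have hcard : N ≤ (V'.erase v).card := by
      have := Finset.card_erase_of_mem hv
      omega
    obtain ⟨t, ht, htc⟩ := Finset.exists_subset_card_eq hcard
    refine ⟨insert v t, ?_, Finset.mem_insert_self _ _, ?_⟩
    · have hsub : insert v t ⊆ V' := by
        intro x hx
        rcases Finset.mem_insert.mp hx with h | h
        · exact h ▸ hv
        · exact Finset.erase_subset _ _ (ht h)
      have hle : d ⊓ V'.inf i ≤ d ⊓ (insert v t).inf i :=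
        inf_le_inf_left _ (Finset.inf_mono hsub)
      have hcard' : (insert v t).card = N + 1 := by
        rw [Finset.card_insert_of_notMem (fun h => (Finset.mem_erase.mp (ht h)).1 rfl), htc]
      refine Finset.mem_filter.mpr ⟨Finset.mem_univ _, hcard', fun h => hbot ?_⟩
      exact le_bot_iff.mp (h ▸ hle)
    · refine inf_le_inf_left _ (Finset.inf_mono ?_)
      intro x hx
      rcases Finset.mem_insert.mp hx with h | h
      · exact h ▸ hv
      · exact Finset.erase_subset _ _ (ht h)
  apply SL.havoc_mono
  · intro v hv
    obtain ⟨V, hVmem, hvV, _⟩ := key v (by simpa using hv)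
    have : v ∈ VN.sup id := Finset.le_sup (f := id) hVmem hvV
    simpa using this
  · obtain ⟨v, hv⟩ := Finset.card_pos.mp (by omega : 0 < V'.card)
    obtain ⟨V, hVmem, _, hle⟩ := key v hv
    exact hle.trans (Finset.le_sup (f := fun V => d ⊓ V.inf i) hVmem)
end

section
/- Reduced lower bound for stabilise: let D be a state lattice over a finite variable type 𝒱, let d ∈ D, i : 𝒱 → D and N : ℕ. Then stabilise_N(i, d) ≥ d ⊔ ⨆_{V ⊆ 𝒱} (d ⊓ M_i(V))⟨V⟩, where the join on the right ranges over all subsets V of 𝒱. -/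
open scoped Classical

/-- Reduced lower bound for `stabilise`: it is above the join of `d` with
`(d ⊓ M_i(V))⟨V⟩` over all subsets `V` of `𝒱`. -/
theorem stabilise_reduced_lower_bound {Val 𝒱 D : Type} [Fintype 𝒱] [Lattice D] [BoundedOrder D]
    (SL : StateLattice Val 𝒱 D) (d : D) (i : 𝒱 → D) (N : ℕ) :
    d ⊔ (Finset.univ : Finset (Finset 𝒱)).sup (fun V => SL.havoc (d ⊓ V.inf i) ↑V) ≤
      stabilise SL N i d := by

  unfold stabilise
  simp only [sup_le_iff, Finset.sup_le_iff, Finset.mem_univ, true_implies]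
  constructor
  · exact le_sup_left.trans le_sup_left
  intro V
  set VN : Finset (Finset 𝒱) := Finset.univ.filter fun V : Finset 𝒱 =>
    V.card = N + 1 ∧ d ⊓ V.inf i ≠ ⊥ with hVN
  by_cases hcard : V.card ≤ N
  · refine le_trans ?_ (le_sup_of_le_left le_sup_right)
    exact Finset.le_sup (f := fun W : Finset 𝒱 => SL.havoc (d ⊓ W.inf i) (↑W : Set 𝒱))
      (s := Finset.univ.filter fun W : Finset 𝒱 => W.card ≤ N)
      (Finset.mem_filter.mpr ⟨Finset.mem_univ _, hcard⟩)
  · by_cases hbot : d ⊓ V.inf i = ⊥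
    · rw [hbot, SL.havoc_bot]; exact bot_le
    · refine le_trans ?_ le_sup_right
      push_neg at hcard
      -- any (N+1)-subset of V containing a given v is in VN
      have key : ∀ v ∈ V, ∃ V' ∈ VN, v ∈ V' ∧ V' ⊆ V := by
        intro v hv
        obtain ⟨t, ht, htc⟩ := Finset.exists_subset_card_eq
          (show N ≤ (V.erase v).card by
            have := Finset.card_erase_of_mem hv
            omega)
        refine ⟨insert v t, ?_, Finset.mem_insert_self _ _, ?_⟩
        · have hvt : v ∉ t := fun h => (Finset.mem_erase.mp (ht h)).1 rfl
          have hsub : insert v t ⊆ V :=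
            Finset.insert_subset hv (ht.trans (Finset.erase_subset _ _))
          have hne : d ⊓ (insert v t).inf i ≠ ⊥ := by
            intro h
            apply hbot
            have : d ⊓ V.inf i ≤ d ⊓ (insert v t).inf i :=
              inf_le_inf_left _ (Finset.inf_mono hsub)
            exact le_bot_iff.mp (h ▸ this)
          exact Finset.mem_filter.mpr ⟨Finset.mem_univ _,
            by rw [Finset.card_insert_of_notMem hvt, htc], hne⟩
        · exact Finset.insert_subset hv (ht.trans (Finset.erase_subset _ _))
      -- V ⊆ VN.sup id
      have hVsub : (V : Set 𝒱) ⊆ ↑(VN.sup id) := by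
        intro v hv
        obtain ⟨V', hV', hvV', _⟩ := key v hv
        exact Finset.mem_coe.mpr (Finset.le_sup (f := id) hV' hvV')
      -- d ⊓ M_i(V) ≤ sup
      obtain ⟨v, hv⟩ := Finset.card_pos.mp (by omega : 0 < V.card)
      obtain ⟨V', hV', _, hV'V⟩ := key v hv
      have hle : d ⊓ V.inf i ≤ VN.sup fun V => d ⊓ V.inf i :=
        le_trans (inf_le_inf_left _ (Finset.inf_mono hV'V)) (Finset.le_sup (f := fun V => d ⊓ V.inf i) hV')
      exact SL.havoc_mono _ _ _ _ hVsub hle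
end

section
/- One-step post-state capture (Case 2 of the stabilise soundness proof): let D be a state lattice over a finite variable type 𝒱, let d ∈ D, i : 𝒱 → D, and let s₁, s₂ be states with s₁ ∈ γ(d) and (s₁, s₂) ∈ γ×(i). Let P = { v ∈ 𝒱 | s₁ v ≠ s₂ v } be the set of variables on which s₁ and s₂ differ. Then s₂ ∈ γ( (d ⊓ M_i(P))⟨P⟩ ), i.e., the post-state s₂ is captured by havocing P in the meet of d with the write-conditions of the variables in P. -/
open scoped Classical

/-- One-step post-state capture: if `s₁ ∈ γ(d)` and `(s₁, s₂) ∈ γ×(i)`, then the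
post-state `s₂` is captured by havocing the set `P` of changed variables in the
meet of `d` with the write-conditions of the variables in `P`. -/
theorem post_state_capture {Val 𝒱 D : Type} [Fintype 𝒱] [Lattice D] [BoundedOrder D]
    (SL : StateLattice Val 𝒱 D) (d : D) (i : 𝒱 → D) (s₁ s₂ : 𝒱 → Val)
    (h₁ : s₁ ∈ SL.gamma d) (h₂ : (s₁, s₂) ∈ gammaX SL i) :
    s₂ ∈ SL.gamma
      (SL.havoc (d ⊓ (Finset.univ.filter fun v : 𝒱 => s₁ v ≠ s₂ v).inf i)
        {v : 𝒱 | s₁ v ≠ s₂ v}) := by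
  apply SL.havoc_spec
  refine ⟨s₁, ?_, fun v hv => by simpa using (not_not.mp hv).symm⟩
  have key : ∀ F : Finset 𝒱, (∀ v ∈ F, s₁ ∈ SL.gamma (i v)) → s₁ ∈ SL.gamma (d ⊓ F.inf i) := by
    intro F
    induction F using Finset.induction with
    | empty => intro _; simpa using h₁
    | @insert a s hx ih =>
      intro h
      have h1 : s₁ ∈ SL.gamma (d ⊓ s.inf i) := ih fun v hv => h v (Finset.mem_insert_of_mem hv)
      have h2 : s₁ ∈ SL.gamma (i a) := h a (Finset.mem_insert_self a s)
      have := SL.gamma_inf (i a) (d ⊓ s.inf i) ⟨h2, h1⟩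
      apply SL.gamma_mono _ _ _ this
      simp [Finset.inf_insert, inf_assoc, inf_left_comm, le_refl]
  have h₂' : ∀ v, s₂ v ≠ s₁ v → s₁ ∈ SL.gamma (i v) := h₂
  exact key _ fun v hv => h₂' v (Ne.symm (Finset.mem_filter.mp hv).2)
end

section
/- Unconstrained-variable elimination optimisation for computing close: let D be a state lattice over a finite variable type 𝒱, let i : 𝒱 → D, v ∈ 𝒱, and let V ⊆ 𝒱 contain a variable u with (i(v))⟨{u}⟩ = i(v). Then (i(v))⟨V⟩ ⊓ ⨅_{v' ∈ V} i(v') ≤ (i(v))⟨V \ {u}⟩ ⊓ ⨅_{v' ∈ V \ {u}} i(v'); hence the variable set V can be safely removed from the join defining close, since its contribution is subsumed by that of V \ {u}. -/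
open scoped Classical

/-- Unconstrained-variable elimination optimisation for computing `close`: if
`u ∈ V` is unconstrained in `i(v)` (havocing it has no effect), then the
contribution of `V` to the join defining `close` is subsumed by that of
`V \ {u}`. -/
theorem unconstrained_elimination {Val 𝒱 D : Type} [Fintype 𝒱] [DecidableEq 𝒱]
    [Lattice D] [BoundedOrder D]
    (SL : StateLattice Val 𝒱 D) (i : 𝒱 → D) (v : 𝒱) (V : Finset 𝒱) (u : 𝒱)
    (hu : u ∈ V) (hhavoc : SL.havoc (i v) {u} = i v) :
    SL.havoc (i v) ↑V ⊓ V.inf i ≤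
      SL.havoc (i v) ↑(V.erase u) ⊓ (V.erase u).inf i := by
  have hset : ({u} ∪ ↑(V.erase u) : Set 𝒱) = ↑V := by
    ext x
    simp only [Set.mem_union, Set.mem_singleton_iff, Finset.coe_erase, Set.mem_diff,
      Finset.mem_coe]
    constructor
    · rintro (rfl | ⟨hx, _⟩) <;> assumption
    · intro hx
      by_cases hxu : x = u
      · exact Or.inl hxu
      · exact Or.inr ⟨hx, hxu⟩
  have h1 : SL.havoc (i v) ↑V = SL.havoc (i v) ↑(V.erase u) := by
    rw [← hset]; exact SL.havoc_absorb _ _ _ hhavoc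
  exact inf_le_inf h1.le (Finset.inf_mono (Finset.erase_subset _ _))
end
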